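/- Let s > 2 and ε > 0. Then there exists a constant C > 0 (depending only on s and ε) such that for all sequences a, b : ℤ → ℂ, the sequence I₂(k) := Σ_{k'∈ℤ, |k'| < |k|/2} ( ⟨k⟩^s − ⟨k'⟩^s − s·(k−k')·k'·⟨k'⟩^{s−2} ) · a(k−k') · b(k') satisfies ‖I₂‖_{ℓ²} ≤ C ‖a‖_{ℓ²_{max(s, 5/2+ε)}} ‖b‖_{ℓ²_{min(s−2, 1/2+ε)}}. -/

import Mathlib

open scoped ENNReal

/-- Japanese bracket `⟨k⟩ = (1 + k²)^(1/2)` for an integer `k`. -/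
noncomputable def jb (k : ℤ) : ℝ := Real.sqrt (1 + (k : ℝ) ^ 2)

/-- Weighted `ℓ²_s` norm of a sequence `a : ℤ → ℂ`, valued in `[0,∞]`. -/
noncomputable def l2 (s : ℝ) (a : ℤ → ℂ) : ℝ≥0∞ :=
  (∑' k : ℤ, ENNReal.ofReal (jb k ^ (2 * s) * ‖a k‖ ^ 2)) ^ (1 / 2 : ℝ)

lemma jb_pos (k : ℤ) : 0 < jb k := Real.sqrt_pos.2 (by positivity)

lemma one_le_jb (k : ℤ) : 1 ≤ jb k := by
  rw [show (1:ℝ) = Real.sqrt 1 by simp]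
  exact Real.sqrt_le_sqrt (by nlinarith [sq_nonneg ((k:ℝ))])

lemma abs_le_jb (k : ℤ) : |(k:ℝ)| ≤ jb k := by
  rw [← Real.sqrt_sq_eq_abs]
  exact Real.sqrt_le_sqrt (by nlinarith)

lemma jb_mono {m n : ℤ} (h : |(m:ℝ)| ≤ |(n:ℝ)|) : jb m ≤ jb n := by
  apply Real.sqrt_le_sqrt
  have := sq_abs (m:ℝ); have := sq_abs (n:ℝ)
  nlinarith [abs_nonneg (m:ℝ)]

lemma half_mul_half (x : ℝ≥0∞) : x ^ (1/2:ℝ) * x ^ (1/2:ℝ) = x := by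
  rw [← sq, ← ENNReal.rpow_natCast (x ^ (1/2:ℝ)) 2, ← ENNReal.rpow_mul]
  norm_num

lemma sq_half (x : ℝ≥0∞) : (x ^ (1/2:ℝ)) ^ 2 = x := by
  rw [sq, half_mul_half]

lemma half_sq (x : ℝ≥0∞) : (x ^ 2) ^ (1/2:ℝ) = x := by
  rw [← ENNReal.rpow_natCast x 2, ← ENNReal.rpow_mul]
  norm_num

lemma rpow_sq (x : ℝ) (hx : 0 ≤ x) (t : ℝ) : (x ^ t) ^ 2 = x ^ (2*t) := by
  rw [← Real.rpow_natCast (x^t) 2, ← Real.rpow_mul hx]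
  norm_num [mul_comm]

lemma tsum_cs (f g : ℤ → ℝ≥0∞) :
    ∑' k, f k * g k ≤ (∑' k, f k ^ 2) ^ (1/2:ℝ) * (∑' k, g k ^ 2) ^ (1/2:ℝ) := by
  have hpq : Real.HolderConjugate 2 2 := Real.HolderConjugate.two_two
  have h := ENNReal.lintegral_mul_le_Lp_mul_Lq (MeasureTheory.Measure.count (α := ℤ)) hpq
      (Measurable.of_discrete (f := f)).aemeasurable (Measurable.of_discrete (f := g)).aemeasurable
  simp only [MeasureTheory.lintegral_count] at h
  have e2 : ∀ x : ℝ≥0∞, x ^ (2:ℝ) = x ^ 2 := fun x => by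
    rw [← ENNReal.rpow_natCast x 2]; norm_num
  simpa only [e2, Pi.mul_apply] using h

lemma conv_bound (Φ Ψ : ℤ → ℝ≥0∞) :
    ∑' k : ℤ, (∑' k' : ℤ, Φ (k - k') * Ψ k') ^ 2 ≤
      (∑' m, Φ m ^ 2) * (∑' m, Ψ m) ^ 2 := by
  have key : ∀ k : ℤ, (∑' k' : ℤ, Φ (k - k') * Ψ k') ^ 2
      ≤ (∑' k' : ℤ, Φ (k - k') ^ 2 * Ψ k') * (∑' m, Ψ m) := by
    intro k
    have e : (fun k' : ℤ => Φ (k - k') * Ψ k')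
        = fun k' => (Φ (k - k') * Ψ k' ^ (1/2:ℝ)) * Ψ k' ^ (1/2:ℝ) := by
      funext k'; rw [mul_assoc, half_mul_half]
    have hcs := tsum_cs (fun k' => Φ (k - k') * Ψ k' ^ (1/2:ℝ)) (fun k' => Ψ k' ^ (1/2:ℝ))
    have hT : (∑' k' : ℤ, Φ (k - k') * Ψ k')
        ≤ (∑' k' : ℤ, Φ (k - k') ^ 2 * Ψ k') ^ (1/2:ℝ) * (∑' m, Ψ m) ^ (1/2:ℝ) := by
      rw [e]
      simpa only [mul_pow, sq_half] using hcs
    calc (∑' k' : ℤ, Φ (k - k') * Ψ k') ^ 2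
        ≤ ((∑' k' : ℤ, Φ (k - k') ^ 2 * Ψ k') ^ (1/2:ℝ) * (∑' m, Ψ m) ^ (1/2:ℝ)) ^ 2 :=
          pow_le_pow_left₀ (zero_le) hT 2
      _ = (∑' k' : ℤ, Φ (k - k') ^ 2 * Ψ k') * (∑' m, Ψ m) := by
          rw [mul_pow, sq_half, sq_half]
  calc ∑' k : ℤ, (∑' k' : ℤ, Φ (k - k') * Ψ k') ^ 2
      ≤ ∑' k : ℤ, (∑' k' : ℤ, Φ (k - k') ^ 2 * Ψ k') * (∑' m, Ψ m) :=
        ENNReal.tsum_le_tsum key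
    _ = (∑' k : ℤ, ∑' k' : ℤ, Φ (k - k') ^ 2 * Ψ k') * (∑' m, Ψ m) :=
        ENNReal.tsum_mul_right
    _ = (∑' k' : ℤ, ∑' k : ℤ, Φ (k - k') ^ 2 * Ψ k') * (∑' m, Ψ m) := by
        rw [ENNReal.tsum_comm]
    _ = (∑' m, Φ m ^ 2) * (∑' m, Ψ m) ^ 2 := by
        have inner : ∀ k' : ℤ, (∑' k : ℤ, Φ (k - k') ^ 2 * Ψ k')
            = (∑' m, Φ m ^ 2) * Ψ k' := by
          intro k'
          rw [ENNReal.tsum_mul_right]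
          congr 1
          exact (Equiv.subRight k').tsum_eq (fun m => Φ m ^ 2)
        simp only [inner]
        rw [ENNReal.tsum_mul_left]
        ring

lemma S_lt_top {ε : ℝ} (hε : 0 < ε) :
    (∑' k : ℤ, ENNReal.ofReal (jb k ^ (-(1 + 2*ε)))) < ⊤ := by
  set g : ℤ → ℝ := fun k => |(k:ℝ)| ^ (-(1 + 2*ε)) + if k = 0 then 1 else 0 with hg
  have hsum : Summable g := by
    apply Summable.add (Real.summable_abs_int_rpow (by linarith))
    apply summable_of_ne_finset_zero (s := {0})
    intro k hk
    simp at hk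
    simp [hk]
  have hle : ∀ k : ℤ, ENNReal.ofReal (jb k ^ (-(1 + 2*ε))) ≤ ENNReal.ofReal (g k) := by
    intro k
    apply ENNReal.ofReal_le_ofReal
    rcases eq_or_ne k 0 with rfl | hk
    · have : jb 0 = 1 := by simp [jb]
      simp [hg, this, Real.one_rpow]
      positivity
    · have h1 : (0:ℝ) < |(k:ℝ)| := by
        simp only [abs_pos, Int.cast_ne_zero]; exact hk
      have h2 := Real.rpow_le_rpow_of_nonpos h1 (abs_le_jb k) (by linarith : -(1+2*ε) ≤ 0)
      show jb k ^ (-(1 + 2*ε)) ≤ |(k:ℝ)| ^ (-(1 + 2*ε)) + if k = 0 then 1 else 0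
      rw [if_neg hk, add_zero]
      exact h2
  calc (∑' k : ℤ, ENNReal.ofReal (jb k ^ (-(1 + 2*ε))))
      ≤ ∑' k : ℤ, ENNReal.ofReal (g k) := ENNReal.tsum_le_tsum hle
    _ = ENNReal.ofReal (∑' k, g k) := by
        rw [ENNReal.ofReal_tsum_of_nonneg _ hsum]
        intro k
        have : (0:ℝ) ≤ |(k:ℝ)| ^ (-(1 + 2*ε)) := Real.rpow_nonneg (abs_nonneg _) _
        rcases eq_or_ne k 0 with rfl | hk <;> simp [hg, *] <;> positivity
    _ < ⊤ := ENNReal.ofReal_lt_top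

lemma region_cast {k k' : ℤ} (h : 2 * |k'| < |k|) : 2 * |(k':ℝ)| < |(k:ℝ)| := by
  have h2 : ((2 * |k'| : ℤ) : ℝ) < ((|k| : ℤ) : ℝ) := Int.cast_lt.2 h
  push_cast at h2
  exact h2

lemma jb_le_of_region {k k' : ℤ} (h : 2 * |k'| < |k|) : jb k' ≤ jb (k - k') := by
  have hr := region_cast h
  apply jb_mono
  push_cast
  have h1 : |(k:ℝ)| - |(k':ℝ)| ≤ |(k:ℝ) - (k':ℝ)| := abs_sub_abs_le_abs_sub _ _
  linarith

lemma jb_le_two_of_region {k k' : ℤ} (h : 2 * |k'| < |k|) : jb k ≤ 2 * jb (k - k') := by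
  have hr := region_cast h
  have h1 : |(k:ℝ)| ≤ |(k:ℝ) - (k':ℝ)| + |(k':ℝ)| := by
    calc |(k:ℝ)| = |((k:ℝ) - (k':ℝ)) + (k':ℝ)| := by ring_nf
    _ ≤ _ := abs_add_le _ _
  have h2 : |(k:ℝ)| ≤ 2 * |(k:ℝ) - (k':ℝ)| := by linarith
  have hsq : 1 + (k:ℝ)^2 ≤ 4 * (1 + ((k:ℝ) - (k':ℝ))^2) := by
    nlinarith [sq_abs (k:ℝ), sq_abs ((k:ℝ) - (k':ℝ)), abs_nonneg ((k:ℝ) - (k':ℝ)),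
      mul_self_le_mul_self (abs_nonneg (k:ℝ)) h2]
  have : jb k ≤ Real.sqrt (4 * (1 + ((k:ℝ) - (k':ℝ))^2)) := Real.sqrt_le_sqrt hsq
  calc jb k ≤ Real.sqrt (4 * (1 + ((k:ℝ) - (k':ℝ))^2)) := this
    _ = 2 * jb (k - k') := by
        rw [Real.sqrt_mul (by norm_num : (0:ℝ) ≤ 4), show Real.sqrt 4 = 2 by
          rw [show (4:ℝ) = 2^2 by norm_num, Real.sqrt_sq (by norm_num : (0:ℝ) ≤ 2)]]
        unfold jb; push_cast; ring_nf

lemma symbol_le (s : ℝ) (hs : 2 < s) {k k' : ℤ} (h : 2 * |k'| < |k|) :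
    |jb k ^ s - jb k' ^ s - s * ((k:ℝ) - (k':ℝ)) * (k':ℝ) * jb k' ^ (s-2)|
      ≤ (2 ^ s + 1 + s) * jb (k - k') ^ s := by
  have s0 : (0:ℝ) ≤ s := by linarith
  have hjb1 := jb_le_of_region h
  have hjb2 := jb_le_two_of_region h
  have t1 : jb k ^ s ≤ 2 ^ s * jb (k - k') ^ s := by
    calc jb k ^ s ≤ (2 * jb (k - k')) ^ s :=
          Real.rpow_le_rpow (jb_pos k).le hjb2 s0
      _ = 2 ^ s * jb (k - k') ^ s := Real.mul_rpow (by norm_num) (jb_pos _).le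
  have t2 : jb k' ^ s ≤ jb (k - k') ^ s := Real.rpow_le_rpow (jb_pos _).le hjb1 s0
  have t3 : |s * ((k:ℝ) - (k':ℝ)) * (k':ℝ) * jb k' ^ (s-2)| ≤ s * jb (k - k') ^ s := by
    have e1 : |s * ((k:ℝ) - (k':ℝ)) * (k':ℝ) * jb k' ^ (s-2)|
        = s * |(k:ℝ) - (k':ℝ)| * |(k':ℝ)| * jb k' ^ (s-2) := by
      rw [abs_mul, abs_mul, abs_mul, abs_of_nonneg s0,
        abs_of_nonneg (Real.rpow_nonneg (jb_pos k').le _)]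
    rw [e1]
    have hkk : |(k:ℝ) - (k':ℝ)| ≤ jb (k - k') := by
      have := abs_le_jb (k - k'); push_cast at this; exact this
    have hk' : |(k':ℝ)| ≤ jb k' := abs_le_jb k'
    have step1 : s * |(k:ℝ) - (k':ℝ)| * |(k':ℝ)| * jb k' ^ (s-2)
        ≤ s * jb (k - k') * jb k' * jb k' ^ (s-2) := by
      have h0 : (0:ℝ) ≤ jb k' ^ (s-2) := Real.rpow_nonneg (jb_pos k').le _
      apply mul_le_mul_of_nonneg_right _ h0
      exact mul_le_mul (mul_le_mul_of_nonneg_left hkk s0) hk' (abs_nonneg _)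
        (mul_nonneg s0 (jb_pos _).le)
    have e2 : s * jb (k - k') * jb k' * jb k' ^ (s-2) = s * jb (k - k') * jb k' ^ (s-1) := by
      rw [mul_assoc, ← Real.rpow_one_add' (jb_pos k').le (by linarith : (1:ℝ) + (s-2) ≠ 0)]
      ring_nf
    have step2 : s * jb (k - k') * jb k' ^ (s-1) ≤ s * jb (k - k') * jb (k - k') ^ (s-1) :=
      mul_le_mul_of_nonneg_left (Real.rpow_le_rpow (jb_pos _).le hjb1 (by linarith))
        (mul_nonneg s0 (jb_pos _).le)
    have e3 : s * jb (k - k') * jb (k - k') ^ (s-1) = s * jb (k - k') ^ s := by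
      rw [mul_assoc, ← Real.rpow_one_add' (jb_pos _).le (by linarith : (1:ℝ) + (s-1) ≠ 0)]
      ring_nf
    calc s * |(k:ℝ) - (k':ℝ)| * |(k':ℝ)| * jb k' ^ (s-2)
        ≤ s * jb (k - k') * jb k' * jb k' ^ (s-2) := step1
      _ = s * jb (k - k') * jb k' ^ (s-1) := e2
      _ ≤ s * jb (k - k') * jb (k - k') ^ (s-1) := step2
      _ = s * jb (k - k') ^ s := e3
  have habs : |jb k ^ s - jb k' ^ s - s * ((k:ℝ) - (k':ℝ)) * (k':ℝ) * jb k' ^ (s-2)|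
      ≤ |jb k ^ s| + |jb k' ^ s| + |s * ((k:ℝ) - (k':ℝ)) * (k':ℝ) * jb k' ^ (s-2)| := by
    calc |jb k ^ s - jb k' ^ s - s * ((k:ℝ) - (k':ℝ)) * (k':ℝ) * jb k' ^ (s-2)|
        ≤ |jb k ^ s - jb k' ^ s| + |s * ((k:ℝ) - (k':ℝ)) * (k':ℝ) * jb k' ^ (s-2)| :=
          abs_sub _ _
      _ ≤ _ := by
          have := abs_sub (jb k ^ s) (jb k' ^ s)
          linarith
  have a1 : |jb k ^ s| = jb k ^ s := abs_of_nonneg (Real.rpow_nonneg (jb_pos k).le _)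
  have a2 : |jb k' ^ s| = jb k' ^ s := abs_of_nonneg (Real.rpow_nonneg (jb_pos k').le _)
  rw [a1, a2] at habs
  have final : jb k ^ s + jb k' ^ s + |s * ((k:ℝ) - (k':ℝ)) * (k':ℝ) * jb k' ^ (s-2)|
      ≤ (2 ^ s + 1 + s) * jb (k - k') ^ s := by
    have := t3
    nlinarith [Real.rpow_nonneg (jb_pos (k-k')).le s]
  linarith

lemma exp_identity (s ε : ℝ) :
    min (s-2) (1/2+ε) - (1/2 + ε) = s - max s (5/2+ε) := by
  rcases le_total (s-2) (1/2+ε) with h|h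
  · rw [min_eq_left h, max_eq_right (by linarith)]; ring
  · rw [min_eq_right h, max_eq_left (by linarith)]; ring

lemma symbol_le' (s ε : ℝ) (hs : 2 < s) (hε : 0 < ε) {k k' : ℤ} (h : 2 * |k'| < |k|) :
    |jb k ^ s - jb k' ^ s - s * ((k:ℝ) - (k':ℝ)) * (k':ℝ) * jb k' ^ (s-2)|
      ≤ (2 ^ s + 1 + s) *
        (jb (k - k') ^ (max s (5/2+ε)) *
          (jb k' ^ (min (s-2) (1/2+ε)) * jb k' ^ (-(1/2+ε)))) := by
  set A := max s (5/2+ε) with hA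
  set B := min (s-2) (1/2+ε) with hB
  have hsA : s ≤ A := le_max_left _ _
  have hjb1 := jb_le_of_region h
  have e1 : jb k' ^ B * jb k' ^ (-(1/2+ε)) = jb k' ^ (s - A) := by
    rw [← Real.rpow_add (jb_pos k')]
    congr 1
    have := exp_identity s ε
    rw [hA, hB]; linarith
  have e2 : jb (k - k') ^ s = jb (k - k') ^ A * jb (k - k') ^ (s - A) := by
    rw [← Real.rpow_add (jb_pos _)]; congr 1; ring
  have e3 : jb (k - k') ^ (s - A) ≤ jb k' ^ (s - A) :=
    Real.rpow_le_rpow_of_nonpos (jb_pos k') hjb1 (by linarith)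
  have key : jb (k - k') ^ s ≤ jb (k - k') ^ A * (jb k' ^ B * jb k' ^ (-(1/2+ε))) := by
    rw [e1, e2]
    exact mul_le_mul_of_nonneg_left e3 (Real.rpow_nonneg (jb_pos _).le _)
  calc _ ≤ (2 ^ s + 1 + s) * jb (k - k') ^ s := symbol_le s hs h
    _ ≤ _ := by
        apply mul_le_mul_of_nonneg_left key
        have : (0:ℝ) < 2 ^ s := Real.rpow_pos_of_pos (by norm_num) s
        linarith

lemma point_aux {P : ℤ → Prop} (f : {m : ℤ // P m} → ℂ) (C₁ : ℝ) (g : {m : ℤ // P m} → ℝ≥0∞)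
    (hb : ∀ k', ENNReal.ofReal ‖f k'‖ ≤ ENNReal.ofReal C₁ * g k') :
    ENNReal.ofReal ‖∑' k', f k'‖ ≤ ENNReal.ofReal C₁ * ∑' k', g k' := by
  by_cases hsumf : Summable f
  · have hnormsum : Summable fun k' => ‖f k'‖ := summable_norm_iff.mpr hsumf
    calc ENNReal.ofReal ‖∑' k', f k'‖
        ≤ ENNReal.ofReal (∑' k', ‖f k'‖) :=
          ENNReal.ofReal_le_ofReal (norm_tsum_le_tsum_norm hnormsum)
      _ = ∑' k', ENNReal.ofReal ‖f k'‖ :=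
          ENNReal.ofReal_tsum_of_nonneg (fun _ => norm_nonneg _) hnormsum
      _ ≤ ∑' k', ENNReal.ofReal C₁ * g k' := ENNReal.tsum_le_tsum hb
      _ = ENNReal.ofReal C₁ * ∑' k', g k' := ENNReal.tsum_mul_left
  · rw [tsum_eq_zero_of_not_summable hsumf]
    simp


lemma tsum_subtype_le' (P : ℤ → Prop) (g : ℤ → ℝ≥0∞) :
    (∑' k' : {m : ℤ // P m}, g k'.1) ≤ ∑' k' : ℤ, g k' :=
  ENNReal.tsum_comp_le_tsum_of_injective Subtype.val_injective g


lemma l2_zero_eq (u : ℤ → ℂ) :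
    l2 0 u = (∑' k : ℤ, (ENNReal.ofReal ‖u k‖) ^ 2) ^ (1/2:ℝ) := by
  unfold l2
  congr 1
  apply tsum_congr
  intro k
  rw [mul_zero, Real.rpow_zero, one_mul, ← ENNReal.ofReal_pow (norm_nonneg _)]


lemma l2_eq_sq (t : ℝ) (u : ℤ → ℂ) :
    l2 t u = (∑' m : ℤ, (ENNReal.ofReal (jb m ^ t * ‖u m‖)) ^ 2) ^ (1/2:ℝ) := by
  unfold l2
  congr 1
  apply tsum_congr
  intro m
  rw [← ENNReal.ofReal_pow (mul_nonneg (Real.rpow_nonneg (jb_pos m).le _) (norm_nonneg _)),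
    mul_pow, rpow_sq _ (jb_pos m).le]


set_option maxHeartbeats 1000000 in
/-- Region `|k'| < |k|/2` piece of the refined commutator, `s > 2`:
`‖I₂‖_{ℓ²} ≤ C ‖a‖_{ℓ²_{max(s,5/2+ε)}} ‖b‖_{ℓ²_{min(s−2,1/2+ε)}}`. -/
theorem refined_commutator_low_piece (s ε : ℝ) (hs : 2 < s) (hε : 0 < ε) :
    ∃ C : ℝ, 0 < C ∧ ∀ a b : ℤ → ℂ,
      l2 0 (fun k => ∑' k' : {m : ℤ // 2 * |m| < |k|},
          Complex.ofReal
              (jb k ^ s - jb k'.1 ^ s -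
                s * ((k : ℝ) - (k'.1 : ℝ)) * (k'.1 : ℝ) * jb k'.1 ^ (s - 2)) *
            a (k - k'.1) * b k'.1)
        ≤ ENNReal.ofReal C *
          (l2 (max s (5 / 2 + ε)) a * l2 (min (s - 2) (1 / 2 + ε)) b) := by
  have h2s : (0:ℝ) < (2:ℝ) ^ s := Real.rpow_pos_of_pos (by norm_num) s
  have hC₁pos : (0:ℝ) < 2 ^ s + 1 + s := by linarith
  set C₁ : ℝ := 2 ^ s + 1 + s with hC₁
  set S : ℝ≥0∞ := ∑' k : ℤ, ENNReal.ofReal (jb k ^ (-(1 + 2*ε))) with hSdef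
  have hS : S < ⊤ := S_lt_top hε
  have hShalf : S ^ (1/2:ℝ) ≠ ⊤ := ENNReal.rpow_ne_top_of_nonneg (by norm_num) hS.ne
  set M : ℝ := (S ^ (1/2:ℝ)).toReal with hM
  have hM0 : 0 ≤ M := ENNReal.toReal_nonneg
  have hSM : S ^ (1/2:ℝ) = ENNReal.ofReal M := by
    rw [hM, ENNReal.ofReal_toReal hShalf]
  refine ⟨C₁ * M + 1, by positivity, ?_⟩
  intro a b
  set A := max s (5 / 2 + ε) with hA
  set B := min (s - 2) (1 / 2 + ε) with hB
  set Φ : ℤ → ℝ≥0∞ := fun m => ENNReal.ofReal (jb m ^ A * ‖a m‖) with hΦ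
  set Ψ : ℤ → ℝ≥0∞ := fun m =>
    ENNReal.ofReal (jb m ^ B * ‖b m‖) * ENNReal.ofReal (jb m ^ (-(1/2+ε))) with hΨ
  set I : ℤ → ℂ := fun k => ∑' k' : {m : ℤ // 2 * |m| < |k|},
      Complex.ofReal
          (jb k ^ s - jb k'.1 ^ s -
            s * ((k : ℝ) - (k'.1 : ℝ)) * (k'.1 : ℝ) * jb k'.1 ^ (s - 2)) *
        a (k - k'.1) * b k'.1 with hI
  -- pointwise bound
  have termbound : ∀ (k : ℤ) (k' : {m : ℤ // 2 * |m| < |k|}),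
      ENNReal.ofReal ‖Complex.ofReal
          (jb k ^ s - jb k'.1 ^ s -
            s * ((k : ℝ) - (k'.1 : ℝ)) * (k'.1 : ℝ) * jb k'.1 ^ (s - 2)) *
        a (k - k'.1) * b k'.1‖ ≤ ENNReal.ofReal C₁ * (Φ (k - k'.1) * Ψ k'.1) := by
    intro k k'
    have hnorm : ‖Complex.ofReal
          (jb k ^ s - jb k'.1 ^ s -
            s * ((k : ℝ) - (k'.1 : ℝ)) * (k'.1 : ℝ) * jb k'.1 ^ (s - 2)) *
        a (k - k'.1) * b k'.1‖ =
        |jb k ^ s - jb k'.1 ^ s -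
          s * ((k : ℝ) - (k'.1 : ℝ)) * (k'.1 : ℝ) * jb k'.1 ^ (s - 2)| *
        (‖a (k - k'.1)‖ * ‖b k'.1‖) := by
      simp only [norm_mul, Complex.norm_real, Real.norm_eq_abs, mul_assoc]
    have hsym := symbol_le' s ε hs hε k'.2
    have hreal : ‖Complex.ofReal
          (jb k ^ s - jb k'.1 ^ s -
            s * ((k : ℝ) - (k'.1 : ℝ)) * (k'.1 : ℝ) * jb k'.1 ^ (s - 2)) *
        a (k - k'.1) * b k'.1‖ ≤ C₁ *
        ((jb (k - k'.1) ^ A * ‖a (k - k'.1)‖) *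
          ((jb k'.1 ^ B * ‖b k'.1‖) * jb k'.1 ^ (-(1/2+ε)))) := by
      rw [hnorm]
      have hmul := mul_le_mul_of_nonneg_right hsym
        (mul_nonneg (norm_nonneg (a (k - k'.1))) (norm_nonneg (b k'.1)))
      calc _ ≤ (C₁ * (jb (k - k'.1) ^ A * (jb k'.1 ^ B * jb k'.1 ^ (-(1/2+ε))))) *
            (‖a (k - k'.1)‖ * ‖b k'.1‖) := hmul
        _ = _ := by ring
    calc ENNReal.ofReal ‖Complex.ofReal
          (jb k ^ s - jb k'.1 ^ s -
            s * ((k : ℝ) - (k'.1 : ℝ)) * (k'.1 : ℝ) * jb k'.1 ^ (s - 2)) *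
        a (k - k'.1) * b k'.1‖
        ≤ ENNReal.ofReal (C₁ *
          ((jb (k - k'.1) ^ A * ‖a (k - k'.1)‖) *
            ((jb k'.1 ^ B * ‖b k'.1‖) * jb k'.1 ^ (-(1/2+ε))))) :=
          ENNReal.ofReal_le_ofReal hreal
      _ = ENNReal.ofReal C₁ * (Φ (k - k'.1) * Ψ k'.1) := by
          have hX0 : 0 ≤ jb (k - k'.1) ^ A * ‖a (k - k'.1)‖ :=
            mul_nonneg (Real.rpow_nonneg (jb_pos _).le _) (norm_nonneg _)
          have hY0 : 0 ≤ jb k'.1 ^ B * ‖b k'.1‖ :=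
            mul_nonneg (Real.rpow_nonneg (jb_pos _).le _) (norm_nonneg _)
          rw [ENNReal.ofReal_mul hC₁pos.le, ENNReal.ofReal_mul hX0,
            ENNReal.ofReal_mul hY0]
  have point : ∀ k : ℤ,
      ENNReal.ofReal ‖I k‖ ≤ ENNReal.ofReal C₁ * ∑' k' : ℤ, Φ (k - k') * Ψ k' := by
    intro k
    have h1 := point_aux _ C₁ (fun k' : {m : ℤ // 2 * |m| < |k|} => Φ (k - k'.1) * Ψ k'.1)
      (termbound k)
    refine h1.trans ?_
    exact mul_le_mul_right (tsum_subtype_le' _ (fun k' => Φ (k - k') * Ψ k')) _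
  -- sums
  set Sa : ℝ≥0∞ := ∑' m : ℤ, (ENNReal.ofReal (jb m ^ A * ‖a m‖)) ^ 2 with hSa
  set Sb : ℝ≥0∞ := ∑' m : ℤ, (ENNReal.ofReal (jb m ^ B * ‖b m‖)) ^ 2 with hSb
  have hl2A : l2 A a = Sa ^ (1/2:ℝ) := l2_eq_sq A a
  have hl2B : l2 B b = Sb ^ (1/2:ℝ) := l2_eq_sq B b
  have hPhiSa : (∑' m : ℤ, Φ m ^ 2) = Sa := by rw [hSa, hΦ]
  have wsq : ∀ m : ℤ, (ENNReal.ofReal (jb m ^ (-(1/2+ε)))) ^ 2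
      = ENNReal.ofReal (jb m ^ (-(1 + 2*ε))) := by
    intro m
    rw [← ENNReal.ofReal_pow (Real.rpow_nonneg (jb_pos m).le _), rpow_sq _ (jb_pos m).le]
    congr 1
    congr 1
    ring
  have psum : (∑' m : ℤ, Ψ m) ≤ Sb ^ (1/2:ℝ) * S ^ (1/2:ℝ) := by
    have hcs := tsum_cs (fun m => ENNReal.ofReal (jb m ^ B * ‖b m‖))
      (fun m => ENNReal.ofReal (jb m ^ (-(1/2+ε))))
    have e1 : (∑' m : ℤ, (ENNReal.ofReal (jb m ^ (-(1/2+ε)))) ^ 2) = S := by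
      rw [hSdef]
      exact tsum_congr wsq
    calc (∑' m : ℤ, Ψ m) ≤ (∑' m : ℤ, (ENNReal.ofReal (jb m ^ B * ‖b m‖)) ^ 2) ^ (1/2:ℝ) *
          (∑' m : ℤ, (ENNReal.ofReal (jb m ^ (-(1/2+ε)))) ^ 2) ^ (1/2:ℝ) := hcs
      _ = Sb ^ (1/2:ℝ) * S ^ (1/2:ℝ) := by rw [e1, hSb]
  have psum2 : (∑' m : ℤ, Ψ m) ^ 2 ≤ Sb * S := by
    calc (∑' m : ℤ, Ψ m) ^ 2 ≤ (Sb ^ (1/2:ℝ) * S ^ (1/2:ℝ)) ^ 2 :=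
          pow_le_pow_left₀ (zero_le) psum 2
      _ = Sb * S := by rw [mul_pow, sq_half, sq_half]
  -- main chain
  have lhs_eq : l2 0 I = (∑' k : ℤ, (ENNReal.ofReal ‖I k‖) ^ 2) ^ (1/2:ℝ) :=
    l2_zero_eq I
  have main : (∑' k : ℤ, (ENNReal.ofReal ‖I k‖) ^ 2)
      ≤ (ENNReal.ofReal C₁) ^ 2 * (Sa * (Sb * S)) := by
    calc ∑' k : ℤ, (ENNReal.ofReal ‖I k‖) ^ 2
        ≤ ∑' k : ℤ, (ENNReal.ofReal C₁ * ∑' k' : ℤ, Φ (k - k') * Ψ k') ^ 2 :=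
          ENNReal.tsum_le_tsum (fun k => pow_le_pow_left₀ (zero_le) (point k) 2)
      _ = (ENNReal.ofReal C₁) ^ 2 * ∑' k : ℤ, (∑' k' : ℤ, Φ (k - k') * Ψ k') ^ 2 := by
          simp only [mul_pow]
          exact ENNReal.tsum_mul_left
      _ ≤ (ENNReal.ofReal C₁) ^ 2 * (Sa * (∑' m : ℤ, Ψ m) ^ 2) := by
          refine mul_le_mul_right ?_ _
          have := conv_bound Φ Ψ
          rw [hPhiSa] at this
          exact this
      _ ≤ _ := by
          apply mul_le_mul_right
          exact mul_le_mul_right psum2 _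
  calc l2 0 I = (∑' k : ℤ, (ENNReal.ofReal ‖I k‖) ^ 2) ^ (1/2:ℝ) := lhs_eq
    _ ≤ ((ENNReal.ofReal C₁) ^ 2 * (Sa * (Sb * S))) ^ (1/2:ℝ) :=
        ENNReal.rpow_le_rpow main (by norm_num)
    _ = ENNReal.ofReal C₁ * (Sa ^ (1/2:ℝ) * (Sb ^ (1/2:ℝ) * S ^ (1/2:ℝ))) := by
        rw [ENNReal.mul_rpow_of_nonneg _ _ (by norm_num : (0:ℝ) ≤ 1/2),
          ENNReal.mul_rpow_of_nonneg _ _ (by norm_num : (0:ℝ) ≤ 1/2),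
          ENNReal.mul_rpow_of_nonneg _ _ (by norm_num : (0:ℝ) ≤ 1/2),
          half_sq]
    _ = (ENNReal.ofReal C₁ * ENNReal.ofReal M) * (l2 A a * l2 B b) := by
        rw [hl2A, hl2B, hSM]
        ring
    _ ≤ ENNReal.ofReal (C₁ * M + 1) * (l2 A a * l2 B b) := by
        apply mul_le_mul_left
        rw [← ENNReal.ofReal_mul hC₁pos.le]
        exact ENNReal.ofReal_le_ofReal (by linarith)
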